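/- arXiv:1802.08996 — 3 statements merged into one kernel-verified Lean document; each statement's English description precedes it below -/
import Mathlib

section
/- Let Γ be a group that is finite-by-abelian (i.e., Γ has a finite normal subgroup N such that Γ/N is abelian) and assume Γ is linear, i.e., Γ embeds as a subgroup of GL_n(k) for some field k. Then Γ is virtually abelian, i.e., Γ has an abelian subgroup of finite index. -/
/-!
The conjugacy class of `g` lies in `commutatorSet Γ * g ⊆ N * g`, so every centralizer of an
element has finite index. On the other hand the linear span of `f(Γ)` inside the
finite-dimensional matrix algebra is spanned by `f(T)` for a finite `T ⊆ Γ`, and anything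
commuting with `f(T)` commutes with that span; hence the centre of `Γ` is the centralizer of
the finite set `T`, an intersection of finitely many subgroups of finite index.
-/

open scoped commutatorElement

namespace Subgroup

variable {G : Type*} [Group G] [Finite (commutatorSet G)]

theorem finiteIndex_centralizer_singleton (g : G) : (centralizer {g}).FiniteIndex :=
  have : Finite (G ⧸ centralizer {g}) :=
    Finite.of_injective _ (quotientCentralizerEmbedding g).injective
  finiteIndex_of_finite_quotient

theorem finiteIndex_centralizer_finset (s : Finset G) :
    (centralizer (s : Set G)).FiniteIndex := by
  rw [centralizer_eq_iInf]
  exact finiteIndex_iInf' _ fun g _ => finiteIndex_centralizer_singleton g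

end Subgroup

theorem exists_finset_centralizer_le_center {G R A : Type*} [Group G] [CommRing R]
    [IsNoetherianRing R] [Ring A] [Algebra R A] [Module.Finite R A]
    (f : G →* A) (hf : Function.Injective f) :
    ∃ T : Finset G, Subgroup.centralizer (T : Set G) ≤ Subgroup.center G := by
  classical
  obtain ⟨s, hs_range, hs_span⟩ := (Submodule.fg_span_iff_fg_span_finset_subset
    (Set.range f)).1 (IsNoetherian.noetherian (Submodule.span R (Set.range f)))
  let T : Finset G := s.preimage f hf.injOn
  have hTs : f '' T = s := by
    rw [Finset.coe_preimage, Set.image_preimage_eq_of_subset hs_range]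
  refine ⟨T, fun a ha => Subgroup.mem_center_iff.2 fun b => hf ?_⟩
  have hs_comm : (s : Set A) ⊆ (Subalgebra.centralizer R {f a}).toSubmodule := by
    rw [← hTs]
    rintro _ ⟨t, ht, rfl⟩ _ rfl
    rw [← map_mul, ← map_mul, Subgroup.mem_centralizer_iff.1 ha t ht]
  have hb : f b ∈ Subalgebra.centralizer R {f a} := by
    have : f b ∈ Submodule.span R (s : Set A) :=
      hs_span ▸ Submodule.subset_span (Set.mem_range_self b)
    exact Submodule.span_le.2 hs_comm this
  rw [map_mul, map_mul]
  exact ((Subalgebra.mem_centralizer_iff R).1 hb (f a) rfl).symm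

theorem Subgroup.finiteIndex_center_of_injective {G R A : Type*} [Group G]
    [Finite (commutatorSet G)] [CommRing R] [IsNoetherianRing R] [Ring A] [Algebra R A]
    [Module.Finite R A] (f : G →* A) (hf : Function.Injective f) :
    (center G).FiniteIndex := by
  obtain ⟨T, hT⟩ := exists_finset_centralizer_le_center (R := R) f hf
  have := finiteIndex_centralizer_finset T
  exact finiteIndex_of_le hT

theorem stmt_0_general {Γ : Type*} [Group Γ]
    (N : Subgroup Γ) (hNfin : Finite N)
    (hab : ∀ a b : Γ, ⁅a, b⁆ ∈ N)
    (k : Type*) [Field k] (n : ℕ)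
    (f : Γ →* GL (Fin n) k) (hf : Function.Injective f) :
    ∃ H : Subgroup Γ, H.FiniteIndex ∧ ∀ a ∈ H, ∀ b ∈ H, a * b = b * a := by
  have : Finite (commutatorSet Γ) :=
    ((N : Set Γ).toFinite.subset (by rintro _ ⟨a, b, rfl⟩; exact hab a b)).to_subtype
  have hf' : Function.Injective ((Units.coeHom (Matrix (Fin n) (Fin n) k)).comp f) :=
    fun _ _ h => hf (Units.ext h)
  refine ⟨Subgroup.center Γ, Subgroup.finiteIndex_center_of_injective (R := k) _ hf', ?_⟩
  intro a ha b _
  exact (Subgroup.mem_center_iff.1 ha b).symm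

/-- A finite-by-abelian linear group is virtually abelian. -/
theorem stmt_0 {Γ : Type*} [Group Γ]
    (N : Subgroup Γ) (hN : N.Normal) (hNfin : Finite N)
    (hab : ∀ a b : Γ, ⁅a, b⁆ ∈ N)
    (k : Type*) [Field k] (n : ℕ)
    (f : Γ →* GL (Fin n) k) (hf : Function.Injective f) :
    ∃ H : Subgroup Γ, H.FiniteIndex ∧ ∀ a ∈ H, ∀ b ∈ H, a * b = b * a :=
  stmt_0_general N hNfin hab k n f hf
end

section
/- Let V be an infinite-dimensional vector space over a finite field F of characteristic different from 2, and let ω : V × V → F be a symplectic (alternating, bilinear) form on V. Define the Heisenberg group Γ = V × F with multiplication (v, λ)(w, β) = (v + w, λ + β + ω(v, w)). Then Γ is a group which is finite-by-abelian but not virtually abelian, provided ω is nondegenerate. -/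
open scoped commutatorElement

/-!
The first coordinate is a homomorphism onto `V`, so every commutator lies in its kernel
`{0} × F`, which is finite. If `H` were an abelian subgroup of finite index, comparing the second
coordinates of `ab` and `ba` gives `2 ω(a, b) = 0`, so the projection `W` of `H` to `V` would be an
`ω`-isotropic subgroup of finite index. Then `w ↦ ω(w, ·)` embeds `W` into the finite set of maps
`V ⧸ W → F` by nondegeneracy, so `W`, hence `V`, is finite.
-/

theorem LinearMap.SeparatingLeft.finite_of_isotropic {R V M : Type*} [CommSemiring R]
    [AddCommGroup V] [Module R V] [AddCommGroup M] [Module R M] [Finite M]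
    {B : V →ₗ[R] V →ₗ[R] M} (hB : B.SeparatingLeft) (W : AddSubgroup V) [W.FiniteIndex]
    (hW : ∀ x ∈ W, ∀ y ∈ W, B x y = 0) : Finite V := by
  let φ : W → V ⧸ W → M := fun w =>
    QuotientAddGroup.lift W (B w).toAddMonoidHom (fun y hy => hW w w.2 y hy)
  have hφ : Function.Injective φ := by
    intro w₁ w₂ h
    have hsub : ∀ y, B (w₁ - w₂ : V) y = 0 := fun y => by
      rw [map_sub, LinearMap.sub_apply, sub_eq_zero]
      exact congrFun h y
    exact Subtype.ext (sub_eq_zero.mp (hB _ hsub))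
  exact (AddSubgroup.finite_iff_finite_and_finiteIndex W).2 ⟨Finite.of_injective φ hφ, ‹_›⟩

namespace Heisenberg

variable {F V : Type*} [CommRing F] [AddCommGroup V] [Module F V] {ω : LinearMap.BilinForm F V}
  [Group (V × F)]

def fstHom (hmul : ∀ p q : V × F, p * q = (p.1 + q.1, p.2 + q.2 + ω p.1 q.1)) :
    V × F →* Multiplicative V :=
  MonoidHom.mk' (fun p => .ofAdd p.1) fun p q => by rw [hmul]; rfl

theorem fstHom_surjective (hmul : ∀ p q : V × F, p * q = (p.1 + q.1, p.2 + q.2 + ω p.1 q.1)) :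
    Function.Surjective (fstHom hmul) :=
  fun v => ⟨(v.toAdd, 0), rfl⟩

theorem finite_ker_fstHom [Finite F]
    (hmul : ∀ p q : V × F, p * q = (p.1 + q.1, p.2 + q.2 + ω p.1 q.1)) :
    Finite (fstHom hmul).ker := by
  refine Finite.of_injective (fun p => p.1.2) ?_
  rintro ⟨p, hp⟩ ⟨q, hq⟩ (h : p.2 = q.2)
  have hp : p.1 = 0 := congrArg Multiplicative.toAdd hp
  have hq : q.1 = 0 := congrArg Multiplicative.toAdd hq
  exact Subtype.ext (Prod.ext (hp.trans hq.symm) h)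

theorem commutatorElement_mem_ker_fstHom
    (hmul : ∀ p q : V × F, p * q = (p.1 + q.1, p.2 + q.2 + ω p.1 q.1)) (a b : V × F) :
    ⁅a, b⁆ ∈ (fstHom hmul).ker := by
  rw [MonoidHom.mem_ker, map_commutatorElement, commutatorElement_eq_one_iff_mul_comm]
  exact mul_comm _ _

theorem apply_fst_eq_zero_of_commute [NoZeroDivisors F] (halt : ω.IsAlt) (htwo : (2 : F) ≠ 0)
    (hmul : ∀ p q : V × F, p * q = (p.1 + q.1, p.2 + q.2 + ω p.1 q.1)) {a b : V × F}
    (hab : Commute a b) : ω a.1 b.1 = 0 := by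
  have hsnd : a.2 + b.2 + ω a.1 b.1 = b.2 + a.2 + ω b.1 a.1 := by
    simpa only [hmul] using congrArg Prod.snd hab.eq
  have hswap : ω b.1 a.1 = -ω a.1 b.1 := (LinearMap.IsAlt.neg halt a.1 b.1).symm
  have h2 : (2 : F) * ω a.1 b.1 = 0 := by linear_combination hsnd + hswap
  exact (mul_eq_zero.mp h2).resolve_left htwo

end Heisenberg

open Heisenberg in
/-- The Heisenberg group `Γ = V × F` of a nondegenerate alternating bilinear form `ω` on an
infinite-dimensional vector space `V` over a finite field `F` of characteristic `≠ 2`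
(with multiplication `(v,λ)(w,β) = (v+w, λ+β+ω(v,w))`) is finite-by-abelian but not
virtually abelian. -/
theorem stmt_1 {F V : Type*} [Field F] [Finite F] [AddCommGroup V] [Module F V]
    (hchar : ringChar F ≠ 2) (hV : ¬ Module.Finite F V)
    (ω : LinearMap.BilinForm F V) (halt : ω.IsAlt) (hnd : ω.Nondegenerate)
    [Group (V × F)]
    (hmul : ∀ p q : V × F, p * q = (p.1 + q.1, p.2 + q.2 + ω p.1 q.1)) :
    (∃ N : Subgroup (V × F), N.Normal ∧ Finite N ∧ ∀ a b : V × F, ⁅a, b⁆ ∈ N) ∧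
    ¬ ∃ H : Subgroup (V × F), H.FiniteIndex ∧ ∀ a ∈ H, ∀ b ∈ H, a * b = b * a := by
  refine ⟨⟨_, (fstHom hmul).normal_ker, finite_ker_fstHom hmul,
    commutatorElement_mem_ker_fstHom hmul⟩, ?_⟩
  rintro ⟨H, hH, hcomm⟩
  let W : AddSubgroup V := (H.map (fstHom hmul)).toAddSubgroup'
  have hW : W.FiniteIndex := ⟨fun h0 => by
    have hdvd := H.index_map_dvd (fstHom_surjective hmul)
    rw [show (H.map (fstHom hmul)).index = 0 from h0, zero_dvd_iff] at hdvd
    exact hH.index_ne_zero hdvd⟩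
  have hW_isotropic : ∀ x ∈ W, ∀ y ∈ W, ω x y = 0 := by
    rintro _ ⟨a, ha, rfl⟩ _ ⟨b, hb, rfl⟩
    exact apply_fst_eq_zero_of_commute halt (Ring.two_ne_zero hchar) hmul (hcomm a ha b hb)
  have : Finite V := hnd.1.finite_of_isotropic W hW_isotropic
  exact hV Module.Finite.of_finite
end

section
/- Let Γ be a subgroup of GL_n(k) for an algebraically closed field k such that the commutator subgroup [Γ, Γ] is finite. Let G be the Zariski closure of Γ in GL_n(k). Then [G, G] = [Γ, Γ]; in particular [G, G] is finite. -/
/-!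
A commutator relation `⁅x, a⁆ = m` is the polynomial identity `x * a = (m * a) * x` in the
entries of `x`, so for a finite set `N` the set `{x | ⁅x, a⁆ ∈ N}` is Zariski closed.
Closing up `Γ` first in one variable and then in the other shows that every commutator of
the closure of `Γ` lies in `⁅Γ, Γ⁆`.
-/

/-- The Zariski topology on the space of `n × n` matrices: closed sets are generated by
zero loci of polynomials in the matrix entries. -/
def matrixZariski (n : ℕ) (k : Type*) [CommRing k] :
    TopologicalSpace (Matrix (Fin n) (Fin n) k) :=
  TopologicalSpace.generateFrom
    {U | ∃ p : MvPolynomial (Fin n × Fin n) k,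
      U = {A | (MvPolynomial.eval fun ij => A ij.1 ij.2) p ≠ 0}}

open scoped commutatorElement Topology

theorem commutatorElement_eq_iff_mul_eq {G : Type*} [Group G] {x a m : G} :
    ⁅x, a⁆ = m ↔ x * a = m * a * x := by
  rw [commutatorElement_def, mul_inv_eq_iff_eq_mul, mul_inv_eq_iff_eq_mul]

section CommutatorClosure

variable {G : Type*} [Group G] [TopologicalSpace G]

theorem commutatorElement_mem_of_mem_closure {s : Set G} {N : Subgroup G}
    (hN : ∀ a, IsClosed {x : G | ⁅x, a⁆ ∈ N}) (hs : ∀ x ∈ s, ∀ y ∈ s, ⁅x, y⁆ ∈ N)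
    {x y : G} (hx : x ∈ closure s) (hy : y ∈ closure s) : ⁅x, y⁆ ∈ N := by
  have closure_left : ∀ x ∈ closure s, ∀ y ∈ s, ⁅x, y⁆ ∈ N := fun x hx y hy =>
    closure_minimal (fun z hz => hs z hz y hy) (hN y) hx
  have closure_right : ∀ z ∈ closure s, ⁅z, x⁆ ∈ N :=
    closure_minimal (fun z hz => show ⁅z, x⁆ ∈ N from
      commutatorElement_inv x z ▸ N.inv_mem (closure_left x hx z hz)) (hN x)
  rw [← commutatorElement_inv]
  exact N.inv_mem (closure_right y hy)

theorem Subgroup.commutator_eq_of_coe_eq_closure {Γ H : Subgroup G}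
    (hN : ∀ a, IsClosed {x : G | ⁅x, a⁆ ∈ ⁅Γ, Γ⁆}) (hH : (H : Set G) = _root_.closure Γ) :
    ⁅H, H⁆ = ⁅Γ, Γ⁆ := by
  have hΓH : Γ ≤ H := fun _ hx => hH.ge (_root_.subset_closure hx)
  refine le_antisymm (Subgroup.commutator_le.mpr fun x hx y hy => ?_)
    (Subgroup.commutator_mono hΓH hΓH)
  exact commutatorElement_mem_of_mem_closure hN
    (fun _ hx _ hy => Subgroup.commutator_mem_commutator hx hy) (hH.le hx) (hH.le hy)

end CommutatorClosure

section Zariski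

variable (n : ℕ) (k : Type*) [CommRing k]

abbrev glZariski : TopologicalSpace (GL (Fin n) k) :=
  @TopologicalSpace.induced _ _ (fun g => (g : Matrix (Fin n) (Fin n) k)) (matrixZariski n k)

variable {n k}

theorem isClosed_matrixZariski_zeroLocus (p : MvPolynomial (Fin n × Fin n) k) :
    IsClosed[matrixZariski n k] {A | MvPolynomial.eval (fun ij => A ij.1 ij.2) p = 0} := by
  let _ := matrixZariski n k
  rw [← isOpen_compl_iff]
  exact TopologicalSpace.isOpen_generateFrom_of_mem ⟨p, rfl⟩

theorem isClosed_matrixZariski_setOf_mul_eq_mul (C D : Matrix (Fin n) (Fin n) k) :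
    IsClosed[matrixZariski n k] {B | B * C = D * B} := by
  open MvPolynomial in
  have hset : {B : Matrix (Fin n) (Fin n) k | B * C = D * B} = ⋂ i, ⋂ j,
      {B | eval (fun ij => B ij.1 ij.2)
        (∑ l, X (i, l) * MvPolynomial.C (C l j) - ∑ l, MvPolynomial.C (D i l) * X (l, j)) = 0} := by
    ext B
    simp [← Matrix.ext_iff, Matrix.mul_apply, sub_eq_zero]
  let _ := matrixZariski n k
  rw [hset]
  exact isClosed_iInter fun i => isClosed_iInter fun j => isClosed_matrixZariski_zeroLocus _

theorem isClosed_glZariski_setOf_commutatorElement_mem (a : GL (Fin n) k)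
    {N : Set (GL (Fin n) k)} (hN : N.Finite) :
    IsClosed[glZariski n k] {x | ⁅x, a⁆ ∈ N} := by
  let _ := matrixZariski n k
  let _ := glZariski n k
  have hset : {x | ⁅x, a⁆ ∈ N} =
      ⋃ m ∈ N, Units.val ⁻¹' {B | B * a.val = (m * a).val * B} := by
    ext x
    simp only [Set.mem_iUnion, Set.mem_preimage, Set.mem_ofPred_eq, exists_prop, ← Units.val_mul,
      ← Units.ext_iff, ← commutatorElement_eq_iff_mul_eq, exists_eq_right']
  rw [hset]
  exact hN.isClosed_biUnion fun m _ =>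
    (isClosed_matrixZariski_setOf_mul_eq_mul _ _).preimage continuous_induced_dom

end Zariski

theorem stmt_5_general (n : ℕ) (k : Type*) [Field k]
    (Γ : Subgroup (GL (Fin n) k)) :
    letI : TopologicalSpace (Matrix (Fin n) (Fin n) k) := matrixZariski n k
    letI : TopologicalSpace (GL (Fin n) k) :=
      TopologicalSpace.induced (fun g => (g : Matrix (Fin n) (Fin n) k)) inferInstance
    Finite (⁅Γ, Γ⁆ : Subgroup (GL (Fin n) k)) →
    ∀ G : Subgroup (GL (Fin n) k),
      (G : Set (GL (Fin n) k)) = closure (Γ : Set (GL (Fin n) k)) →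
      (⁅G, G⁆ : Subgroup (GL (Fin n) k)) = ⁅Γ, Γ⁆ ∧
        Finite (⁅G, G⁆ : Subgroup (GL (Fin n) k)) := by
  intro hfin G hG
  let _ := glZariski n k
  have heq : ⁅G, G⁆ = ⁅Γ, Γ⁆ := Subgroup.commutator_eq_of_coe_eq_closure
    (fun a => isClosed_glZariski_setOf_commutatorElement_mem a (Set.toFinite _)) hG
  exact ⟨heq, heq ▸ hfin⟩

/-- If `Γ ≤ GL_n(k)` (`k` algebraically closed) has finite commutator subgroup and `G` is the
Zariski closure of `Γ`, then `[G,G] = [Γ,Γ]`; in particular `[G,G]` is finite. -/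
theorem stmt_5 (n : ℕ) (k : Type*) [Field k] [IsAlgClosed k]
    (Γ : Subgroup (GL (Fin n) k)) :
    letI : TopologicalSpace (Matrix (Fin n) (Fin n) k) := matrixZariski n k
    letI : TopologicalSpace (GL (Fin n) k) :=
      TopologicalSpace.induced (fun g => (g : Matrix (Fin n) (Fin n) k)) inferInstance
    Finite (⁅Γ, Γ⁆ : Subgroup (GL (Fin n) k)) →
    ∀ G : Subgroup (GL (Fin n) k),
      (G : Set (GL (Fin n) k)) = closure (Γ : Set (GL (Fin n) k)) →
      (⁅G, G⁆ : Subgroup (GL (Fin n) k)) = ⁅Γ, Γ⁆ ∧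
        Finite (⁅G, G⁆ : Subgroup (GL (Fin n) k)) :=
  stmt_5_general n k Γ
end
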